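/- For every integer n ≥ 3, in the presented group G_n = ⟨R₁, ..., R_{n-1} | braid relations, far commutation, R₁² = R₂ R₁² R₂⟩, every generator R_i has order exactly 8. -/
import Mathlib


/-- The relators of the presentation
`⟨R₁, …, R_{n-1} | RᵢRᵢ₊₁Rᵢ = Rᵢ₊₁RᵢRᵢ₊₁ (1 ≤ i ≤ n-2); RᵢRⱼ = RⱼRᵢ (|i-j| ≥ 2);
R₁² = R₂R₁²R₂⟩`, as elements of the free group on `n - 1` generators
(indexed by `Fin (n-1)`, the generator `Rᵢ` being `FreeGroup.of ⟨i-1, _⟩`). -/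
def spinOctRels (n : ℕ) : Set (FreeGroup (Fin (n - 1))) :=
  { r | (∃ i j : Fin (n - 1), (j : ℕ) = (i : ℕ) + 1 ∧
          r = (FreeGroup.of i * FreeGroup.of j * FreeGroup.of i) *
              (FreeGroup.of j * FreeGroup.of i * FreeGroup.of j)⁻¹) ∨
        (∃ i j : Fin (n - 1), (i : ℕ) + 2 ≤ (j : ℕ) ∧
          r = (FreeGroup.of i * FreeGroup.of j) * (FreeGroup.of j * FreeGroup.of i)⁻¹) ∨
        (∃ i j : Fin (n - 1), (i : ℕ) = 0 ∧ (j : ℕ) = 1 ∧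
          r = (FreeGroup.of i) ^ 2 *
              (FreeGroup.of j * (FreeGroup.of i) ^ 2 * FreeGroup.of j)⁻¹) }

lemma key {G : Type*} [Group G] (a b : G) (h1 : a*b*a = b*a*b) (h2 : a*a = b*(a*a)*b) :
    a^8 = 1 := by
  have hta : b*(a*b*a) = (a*b*a)*a := by
    calc b*(a*b*a) = (b*a*b)*a := by group
    _ = (a*b*a)*a := by rw [← h1]
  have htb0 : a*(a*b*a) = (a*b*a)*b := by
    calc a*(a*b*a) = a*(b*a*b) := by rw [h1]
    _ = (a*b*a)*b := by group
  have HA : ∀ x : G, b*((a*b*a)*x) = (a*b*a)*(a*x) := fun x => by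
    calc b*((a*b*a)*x) = (b*a*b)*(a*x) := by group
    _ = (a*b*a)*(a*x) := by rw [← h1]
  have HB : ∀ x : G, a*((a*b*a)*x) = (a*b*a)*(b*x) := fun x => by
    calc a*((a*b*a)*x) = a*((b*a*b)*x) := by rw [h1]
    _ = (a*b*a)*(b*x) := by group
  have HBB : ∀ x : G, b*(b*((a*b*a)*x)) = (a*b*a)*(a*(a*x)) := fun x => by rw [HA, HA]
  have F1 : b*(b*(a*b*a)) = (a*b*a)*(a*a) := by rw [hta, HA]
  have F2 : (a*b*a)*(a*a) = a*(b*(b*(a*(a*b*a)))) := by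
    calc (a*b*a)*(a*a) = (a*b*a)*(b*(a*a)*b) := by conv_lhs => rw [h2]
    _ = (a*b*a)*(b*((a*a)*b)) := by group
    _ = a*((a*b*a)*((a*a)*b)) := by rw [← HB]
    _ = a*((a*b*a)*(a*(a*b))) := by group
    _ = a*(b*(b*((a*b*a)*b))) := by rw [← HBB]
    _ = a*(b*(b*(a*(a*b*a)))) := by rw [← htb0]
  have F : (b*b)*(a*b*a) = (a*(b*(b*a)))*(a*b*a) := by
    calc (b*b)*(a*b*a) = b*(b*(a*b*a)) := by group
    _ = (a*b*a)*(a*a) := F1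
    _ = a*(b*(b*(a*(a*b*a)))) := F2
    _ = (a*(b*(b*a)))*(a*b*a) := by group
  have h3 : b*b = a*(b*(b*a)) := mul_right_cancel F
  have H5 : ∀ x : G, a*(b*(b*x)) = b*(b*(a⁻¹*x)) := fun x => by
    calc a*(b*(b*x)) = (a*(b*(b*a)))*(a⁻¹*x) := by group
    _ = (b*b)*(a⁻¹*x) := by rw [← h3]
    _ = b*(b*(a⁻¹*x)) := by group
  have H6 : ∀ x : G, b⁻¹*(a*(a*x)) = a*(a*(b*x)) := fun x => by
    calc b⁻¹*(a*(a*x)) = b⁻¹*((a*a)*x) := by group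
    _ = b⁻¹*((b*(a*a)*b)*x) := by conv_lhs => rw [h2]
    _ = a*(a*(b*x)) := by group
  have H4 : ∀ x : G, b*(a*(a*x)) = a*(a*(b⁻¹*x)) := fun x => by
    calc b*(a*(a*x)) = (b*(a*a)*b)*(b⁻¹*x) := by group
    _ = (a*a)*(b⁻¹*x) := by rw [← h2]
    _ = a*(a*(b⁻¹*x)) := by group
  have e1 : b⁻¹*(b⁻¹*(a*(a*(b*b)))) = a*(a*(b*(b*(b*b)))) := by rw [H6, H6]
  have e2 : b⁻¹*(b⁻¹*(a*(a*(b*b)))) = a⁻¹*a⁻¹ := by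
    calc b⁻¹*(b⁻¹*(a*(a*(b*b)))) = b⁻¹*(b⁻¹*(a*(a*(b*(b*1))))) := by group
    _ = b⁻¹*(b⁻¹*(a*(b*(b*(a⁻¹*1))))) := by rw [H5]
    _ = b⁻¹*(b⁻¹*(b*(b*(a⁻¹*(a⁻¹*1))))) := by rw [H5]
    _ = a⁻¹*a⁻¹ := by group
  have e12 : a*(a*(b*(b*(b*b)))) = a⁻¹*a⁻¹ := e1.symm.trans e2
  have hb4 : b*(b*(b*b)) = a⁻¹*(a⁻¹*(a⁻¹*a⁻¹)) := by
    calc b*(b*(b*b)) = a⁻¹*(a⁻¹*(a*(a*(b*(b*(b*b)))))) := by group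
    _ = a⁻¹*(a⁻¹*(a⁻¹*a⁻¹)) := by rw [e12]
  have hb4i : b⁻¹*(b⁻¹*(b⁻¹*(b⁻¹*(1:G)))) = a*(a*(a*a)) := by
    calc b⁻¹*(b⁻¹*(b⁻¹*(b⁻¹*(1:G)))) = (b*(b*(b*b)))⁻¹ := by group
    _ = (a⁻¹*(a⁻¹*(a⁻¹*a⁻¹)))⁻¹ := by rw [hb4]
    _ = a*(a*(a*a)) := by simp [mul_inv_rev, inv_inv, mul_assoc]
  have f1 : b*(b*(b*(b*(a*(a*(1:G)))))) = a*(a*(b⁻¹*(b⁻¹*(b⁻¹*(b⁻¹*1))))) := by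
    rw [H4, H4, H4, H4]
  have f1b : b*(b*(b*(b*(a*(a*(1:G)))))) = a*(a*(a*(a*(a*a)))) := by rw [f1, hb4i]
  have f2 : b*(b*(b*(b*(a*(a*(1:G)))))) = (a⁻¹*(a⁻¹*(a⁻¹*a⁻¹)))*(a*(a*1)) := by
    calc b*(b*(b*(b*(a*(a*(1:G)))))) = (b*(b*(b*b)))*(a*(a*1)) := by group
    _ = (a⁻¹*(a⁻¹*(a⁻¹*a⁻¹)))*(a*(a*1)) := by rw [hb4]
  have f : (a⁻¹*(a⁻¹*(a⁻¹*a⁻¹)))*(a*(a*(1:G))) = a*(a*(a*(a*(a*a)))) := f2.symm.trans f1b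
  calc a^8 = (a*(a*(a*(a*(a*a))))) * ((a⁻¹*(a⁻¹*(a⁻¹*a⁻¹)))*(a*(a*(1:G))))⁻¹ := by group
  _ = (a*(a*(a*(a*(a*a))))) * (a*(a*(a*(a*(a*a)))))⁻¹ := by rw [f]
  _ = 1 := by group

noncomputable section
variable {A : Type*} [Ring A] [Algebra ℝ A]

lemma c_mul_c : (Real.sqrt 2 / 2) * (Real.sqrt 2 / 2) = 1/2 := by
  rw [div_mul_div_comm, Real.mul_self_sqrt] <;> norm_num

lemma half_smul_double (x : A) : (1/2 : ℝ) • (x + x) = x := by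
  rw [← two_smul ℝ x, smul_smul]; norm_num

def rUnit (u : A) (hu : u*u = -1) : Aˣ where
  val := (Real.sqrt 2 / 2) • (1 + u)
  inv := (Real.sqrt 2 / 2) • (1 - u)
  val_inv := by
    rw [smul_mul_smul_comm, c_mul_c, show ((1:A)+u)*(1-u) = 1 - u*u by noncomm_ring, hu,
      show (1:A) - (-1) = 1 + 1 by noncomm_ring, half_smul_double]
  inv_val := by
    rw [smul_mul_smul_comm, c_mul_c, show ((1:A)-u)*(1+u) = 1 - u*u by noncomm_ring, hu,
      show (1:A) - (-1) = 1 + 1 by noncomm_ring, half_smul_double]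

lemma rUnit_mul_self (u : A) (hu : u*u = -1) :
    ((rUnit u hu : Aˣ) : A) * ((rUnit u hu : Aˣ) : A) = u := by
  show ((Real.sqrt 2 / 2) • (1 + u)) * ((Real.sqrt 2 / 2) • (1 + u)) = u
  rw [smul_mul_smul_comm, c_mul_c, show ((1:A)+u)*(1+u) = (1 + u*u) + (u + u) by noncomm_ring,
    hu, show ((1:A) + (-1)) + (u + u) = u + u by abel, half_smul_double]

lemma rUnit_sq (u : A) (hu : u*u = -1) : ((rUnit u hu) ^ 2 : Aˣ) = u := by
  rw [pow_two, Units.val_mul, rUnit_mul_self]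

lemma rUnit_pow4 (u : A) (hu : u*u = -1) : (((rUnit u hu)^4 : Aˣ) : A) = -1 := by
  rw [show (4:ℕ) = 2*2 by norm_num, pow_mul, Units.val_pow_eq_pow_val, rUnit_sq, ← hu, pow_two]

lemma neg_swap {u v : A} (huv : u*v = -(v*u)) : v*u = -(u*v) := by rw [huv, neg_neg]

lemma rUnit_val (u : A) (hu : u*u = -1) :
    ((rUnit u hu : Aˣ) : A) = (Real.sqrt 2 / 2) • (1 + u) := rfl

lemma sandwich' {u v : A} (hv : v*v = -1) (huv : u*v = -(v*u)) : v*u*v = u := by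
  have h : v*u*v = -((u*v)*v) := by rw [neg_swap huv]; noncomm_ring
  rw [h, show ((u*v)*v : A) = u*(v*v) by noncomm_ring, hv]
  simp

lemma rUnit_braid (u v : A) (hu : u*u = -1) (hv : v*v = -1) (huv : u*v = -(v*u)) :
    rUnit u hu * rUnit v hv * rUnit u hu = rUnit v hv * rUnit u hu * rUnit v hv := by
  have hvu : v*u = -(u*v) := neg_swap huv
  have huvu : u*v*u = v := sandwich' hu hvu
  have hvuv : v*u*v = u := sandwich' hv huv
  have expand : ∀ w z : A, (1+w)*(1+z)*(1+w)
      = 1 + w + z + w*z + w + w*w + z*w + w*z*w := by intros; noncomm_ring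
  have core : ((1:A)+u)*(1+v)*(1+u) = ((1:A)+v)*(1+u)*(1+v) := by
    rw [expand u v, expand v u, hu, hv, huvu, hvuv, huv]
    abel
  ext
  simp only [Units.val_mul, rUnit_val, smul_mul_smul_comm]
  rw [core]

lemma rUnit_comm (u w : A) (hu : u*u = -1) (hw : w*w = -1) (huw : u*w = w*u) :
    rUnit u hu * rUnit w hw = rUnit w hw * rUnit u hu := by
  have core : ((1:A)+u)*(1+w) = ((1:A)+w)*(1+u) := by
    rw [show ((1:A)+u)*(1+w) = 1 + u + w + u*w by noncomm_ring,
      show ((1:A)+w)*(1+u) = 1 + w + u + w*u by noncomm_ring, huw]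
    abel
  ext
  simp only [Units.val_mul, rUnit_val, smul_mul_smul_comm]
  rw [core]

lemma rUnit_extra (u v : A) (hu : u*u = -1) (hv : v*v = -1) (huv : u*v = -(v*u)) :
    (rUnit u hu)^2 = rUnit v hv * (rUnit u hu)^2 * rUnit v hv := by
  have hvuv : v*u*v = u := sandwich' hv huv
  ext
  rw [Units.val_mul, Units.val_mul, Units.val_pow_eq_pow_val, pow_two, rUnit_mul_self]
  rw [rUnit_val, smul_mul_assoc, smul_mul_smul_comm, c_mul_c,
    show ((1:A)+v)*u*(1+v) = (u + v*u*v) + (u*v + v*u) by noncomm_ring,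
    hvuv, huv, show (-(v*u) + v*u : A) = 0 by abel, add_zero, half_smul_double]

end

section mm
variable {A : Type*} [Ring A]

lemma tail_sq {x : A} (h : x*x = 1) : ∀ t, x*(x*t) = t := fun t => by
  rw [← mul_assoc, h, one_mul]

lemma tail_swap {x y : A} (h : y*x = -(x*y)) : ∀ t, y*(x*t) = -(x*(y*t)) := fun t => by
  rw [← mul_assoc, h, neg_mul, mul_assoc]

lemma mm_sq {x y : A} (hx : x*x = 1) (hy : y*y = 1) (hyx : y*x = -(x*y)) :
    (x*y)*(x*y) = -1 := by
  simp only [mul_assoc, tail_swap hyx, tail_sq hx, tail_sq hy, mul_neg, neg_mul, neg_neg, hy]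

lemma mm_anti {x y z : A} (hy : y*y = 1) (hyx : y*x = -(x*y)) (hzx : z*x = -(x*z))
    (hzy : z*y = -(y*z)) : (x*y)*(y*z) = -((y*z)*(x*y)) := by
  simp only [mul_assoc, tail_swap hyx, tail_swap hzx, tail_swap hzy, tail_sq hy,
    mul_neg, neg_mul, neg_neg, hy, hyx, hzx, hzy]

lemma mm_comm {x y z w : A} (hzx : z*x = -(x*z)) (hzy : z*y = -(y*z))
    (hwx : w*x = -(x*w)) (hwy : w*y = -(y*w)) : (x*y)*(z*w) = (z*w)*(x*y) := by
  simp only [mul_assoc, tail_swap hzx, tail_swap hzy, tail_swap hwx, tail_swap hwy,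
    mul_neg, neg_mul, neg_neg, hzx, hzy, hwx, hwy]
end mm
open CliffordAlgebra

noncomputable section
variable (n : ℕ)

abbrev Qf : QuadraticForm ℝ (Fin n → ℝ) := QuadraticMap.weightedSumSquares ℝ (fun _ : Fin n => (1:ℝ))

lemma Qf_single (i : Fin n) : Qf n (Pi.single i 1) = 1 := by
  simp [QuadraticMap.weightedSumSquares_apply, Pi.single_apply]

lemma Qf_ortho {i j : Fin n} (h : i ≠ j) :
    (Qf n).IsOrtho (Pi.single i 1) (Pi.single j 1) := by
  rw [QuadraticMap.isOrtho_def]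
  simp only [QuadraticMap.weightedSumSquares_apply, Pi.add_apply, Pi.single_apply]
  rw [← Finset.sum_add_distrib]
  congr 1
  ext k
  by_cases hk : k = i <;> by_cases hk' : k = j <;> simp_all <;> ring

abbrev CA := CliffordAlgebra (Qf n)

def eg (i : Fin n) : CA n := ι (Qf n) (Pi.single i 1)

lemma eg_sq (i : Fin n) : eg n i * eg n i = 1 := by
  rw [eg, ι_sq_scalar, Qf_single, map_one]

lemma eg_anti {i j : Fin n} (h : i ≠ j) : eg n j * eg n i = -(eg n i * eg n j) := by
  exact ι_mul_ι_comm_of_isOrtho (Qf_ortho n h.symm)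

lemma one_ne_neg_one : (1 : CA n) ≠ -1 := by
  intro h
  have h0 : (1:CA n) + 1 = 0 := by nth_rewrite 2 [h]; simp
  have h3 := congrArg (equivExterior (Qf n)) h0
  have e1 : (equivExterior (Qf n)) 1 = 1 := changeForm_one (changeForm.associated_neg_proof (Q := Qf n))
  rw [map_add, map_zero, e1] at h3
  have : ((algebraMap ℝ (ExteriorAlgebra ℝ (Fin n → ℝ))) 2) = algebraMap ℝ _ 0 := by
    rw [map_ofNat, map_zero]
    convert h3 using 1
    norm_num
  have := (ExteriorAlgebra.algebraMap_inj _ _ _).mp this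
  norm_num at this

end


noncomputable section main
open CliffordAlgebra
variable (n : ℕ)

def ugenN (k : ℕ) (h : k + 1 < n) : CA n := eg n ⟨k, by omega⟩ * eg n ⟨k+1, h⟩

lemma ugenN_congr {k l : ℕ} (h : k = l) (hk : k + 1 < n) (hl : l + 1 < n) :
    ugenN n k hk = ugenN n l hl := by subst h; rfl

lemma egN_anti {k l : ℕ} (hk : k < n) (hl : l < n) (h : k ≠ l) :
    eg n ⟨l,hl⟩ * eg n ⟨k,hk⟩ = -(eg n ⟨k,hk⟩ * eg n ⟨l,hl⟩) :=
  eg_anti n (by simp [Fin.ext_iff]; omega)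

lemma ugenN_mul_self (k : ℕ) (h : k+1 < n) : ugenN n k h * ugenN n k h = -1 :=
  mm_sq (eg_sq n _) (eg_sq n _) (egN_anti n _ _ (by omega))

lemma ugenN_anti (k : ℕ) (h1 : k+1+1 < n) (h0 : k+1 < n) :
    ugenN n k h0 * ugenN n (k+1) h1 = -(ugenN n (k+1) h1 * ugenN n k h0) :=
  mm_anti (eg_sq n _) (egN_anti n _ _ (by omega)) (egN_anti n _ _ (by omega))
    (egN_anti n _ _ (by omega))

lemma ugenN_comm (k l : ℕ) (h : k+2 ≤ l) (hk : k+1 < n) (hl : l+1 < n) :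
    ugenN n k hk * ugenN n l hl = ugenN n l hl * ugenN n k hk :=
  mm_comm (egN_anti n _ _ (by omega)) (egN_anti n _ _ (by omega))
    (egN_anti n _ _ (by omega)) (egN_anti n _ _ (by omega))

def ugen (i : Fin (n-1)) : CA n := ugenN n i.1 (by omega)

lemma ugen_mul_self (i : Fin (n-1)) : ugen n i * ugen n i = -1 := ugenN_mul_self n _ _

lemma rUnit_congr {A : Type*} [Ring A] [Algebra ℝ A] {u v : A} (h : u = v)
    (hu : u*u = -1) (hv : v*v = -1) : rUnit u hu = rUnit v hv := by subst h; rfl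

def fU (i : Fin (n-1)) : (CA n)ˣ := rUnit (ugen n i) (ugen_mul_self n i)

lemma fU_braid {i j : Fin (n-1)} (h : (j:ℕ) = (i:ℕ)+1) :
    fU n i * fU n j * fU n i = fU n j * fU n i * fU n j := by
  have hj : fU n j = rUnit (ugenN n ((i:ℕ)+1) (by omega)) (ugenN_mul_self n _ _) :=
    rUnit_congr (ugenN_congr n h _ _) _ _
  rw [fU, hj]
  exact rUnit_braid _ _ _ _ (ugenN_anti n i.1 _ _)

lemma fU_comm {i j : Fin (n-1)} (h : (i:ℕ)+2 ≤ (j:ℕ)) :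
    fU n i * fU n j = fU n j * fU n i := by
  exact rUnit_comm _ _ _ _ (ugenN_comm n i.1 j.1 h _ _)

lemma fU_extra {i j : Fin (n-1)} (h : (j:ℕ) = (i:ℕ)+1) :
    (fU n i)^2 = fU n j * (fU n i)^2 * fU n j := by
  have hj : fU n j = rUnit (ugenN n ((i:ℕ)+1) (by omega)) (ugenN_mul_self n _ _) :=
    rUnit_congr (ugenN_congr n h _ _) _ _
  rw [fU, hj]
  exact rUnit_extra _ _ _ _ (ugenN_anti n i.1 _ _)

lemma rels_hold : ∀ r ∈ spinOctRels n, FreeGroup.lift (fU n) r = 1 := by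
  rintro r (⟨i, j, hij, rfl⟩ | ⟨i, j, hij, rfl⟩ | ⟨i, j, hi, hj, rfl⟩) <;>
    simp only [map_mul, map_inv, map_pow, FreeGroup.lift_apply_of, mul_inv_eq_one]
  · exact fU_braid n hij
  · exact fU_comm n hij
  · exact fU_extra n (by omega)

def φh : PresentedGroup (spinOctRels n) →* (CA n)ˣ := PresentedGroup.toGroup (rels_hold n)

-- relations inside the presented group
lemma rel_of_mem {r : FreeGroup (Fin (n-1))} (hr : r ∈ spinOctRels n) :
    PresentedGroup.mk (spinOctRels n) r = 1 :=
  (QuotientGroup.eq_one_iff _).mpr (Subgroup.subset_normalClosure hr)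

lemma pg_braid {i j : Fin (n-1)} (h : (j:ℕ) = (i:ℕ)+1) :
    (PresentedGroup.of (rels := spinOctRels n) i) * PresentedGroup.of j * PresentedGroup.of i
      = PresentedGroup.of j * PresentedGroup.of i * PresentedGroup.of j := by
  have := rel_of_mem n (Or.inl ⟨i, j, h, rfl⟩)
  simp only [map_mul, map_inv, mul_inv_eq_one] at this
  exact this

lemma pg_extra {i j : Fin (n-1)} (hi : (i:ℕ) = 0) (hj : (j:ℕ) = 1) :
    (PresentedGroup.of (rels := spinOctRels n) i)^2
      = PresentedGroup.of j * (PresentedGroup.of i)^2 * PresentedGroup.of j := by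
  have := rel_of_mem n (Or.inr (Or.inr ⟨i, j, hi, hj, rfl⟩))
  simp only [map_mul, map_inv, map_pow, mul_inv_eq_one] at this
  exact this

lemma pg_pow8 (hn : 3 ≤ n) (i : Fin (n-1)) :
    (PresentedGroup.of (rels := spinOctRels n) i)^8 = 1 := by
  obtain ⟨k, hk⟩ := i
  induction k with
  | zero =>
    have h01 : ((⟨1, by omega⟩ : Fin (n-1)) : ℕ) = ((⟨0, hk⟩ : Fin (n-1)) : ℕ) + 1 := rfl
    have hb := pg_braid n (i := ⟨0, hk⟩) (j := ⟨1, by omega⟩) h01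
    have he := pg_extra n (i := ⟨0, hk⟩) (j := ⟨1, by omega⟩) rfl rfl
    refine key _ _ hb ?_
    have := he
    rw [pow_two] at this
    convert this using 2 <;> group
  | succ k ih =>
    have hk' : k < n - 1 := by omega
    set x := PresentedGroup.of (rels := spinOctRels n) ⟨k, hk'⟩
    set y := PresentedGroup.of (rels := spinOctRels n) ⟨k+1, hk⟩
    have hb : x*y*x = y*x*y := pg_braid n rfl
    have hconj : (x*y)*x*(x*y)⁻¹ = y := by
      rw [show (x*y)*x*(x*y)⁻¹ = (x*y*x)*(y⁻¹*x⁻¹) by group, hb]; group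
    calc y^8 = ((x*y)*x*(x*y)⁻¹)^8 := by rw [hconj]
    _ = (x*y)*x^8*(x*y)⁻¹ := by rw [conj_pow]
    _ = 1 := by rw [ih hk']; group

lemma fU_pow4_ne (i : Fin (n-1)) : (fU n i)^4 ≠ 1 := by
  intro h
  have hv := congrArg (Units.val) h
  rw [show fU n i = rUnit (ugen n i) (ugen_mul_self n i) from rfl, rUnit_pow4] at hv
  exact one_ne_neg_one n hv.symm

theorem stmt_14' (hn : 3 ≤ n) (i : Fin (n - 1)) :
    orderOf (PresentedGroup.of (rels := spinOctRels n) i) = 8 := by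
  set x := PresentedGroup.of (rels := spinOctRels n) i
  have hd8 : orderOf x ∣ 8 := orderOf_dvd_of_pow_eq_one (pg_pow8 n hn i)
  have hx4 : x^4 ≠ 1 := by
    intro h
    apply fU_pow4_ne n i
    have := congrArg (φh n) h
    rw [map_pow, map_one] at this
    rwa [show (φh n) x = fU n i from PresentedGroup.toGroup.of _] at this
  have hd4 : ¬ orderOf x ∣ 4 := fun h => hx4 (orderOf_dvd_iff_pow_eq_one.mp h)
  have hle : orderOf x ≤ 8 := Nat.le_of_dvd (by norm_num) hd8
  interval_cases h : (orderOf x) <;> first | rfl | (exfalso; revert hd8 hd4; decide)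

end main

theorem stmt_14 (n : ℕ) (hn : 3 ≤ n) (i : Fin (n - 1)) :
    orderOf (PresentedGroup.of (rels := spinOctRels n) i) = 8 := stmt_14' n hn i
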